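/- arXiv:2505.09022 — 4 statements merged into one kernel-verified Lean document; each statement's English description precedes it below -/
import Mathlib

section
/- Single-layer S6 models are not universal approximators (Theorem 3.1, part 2): Fix any constant Δ > 0 and force all sampling intervals of the S6 unit to equal Δ (i.e. Δ_k^{(i)} = Δ for all i and k, so Ā_k^{(i)} = exp(ΔA) is input-independent while B̄_k^{(i)} and C̄_k remain input-dependent). Let σ: ℝ → ℝ be any function and let L ≥ 3. Then there exist a continuous function G: [0,1]^{L−1} × {1} → ℝ and some ε > 0 such that for every d ≥ 1, every n ≥ 1, and every choice of parameters M, N, θ ∈ ℝ^d, invertible A ∈ ℝ^{n×n}, B ∈ ℝ^{n×d}, C ∈ ℝ^{d×n}, the single-layer model G̃ with recurrent unit Γ_S6 satisfies |G̃(u) − G(u)| > ε for some u ∈ [0,1]^{L−1} × {1}. -/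
/-!
With `Δ` fixed, `Ā = exp(ΔA)` no longer depends on the input, and on a scalar input `u • M` both
`B̄_k` and the channel input are linear in `u_k`. The final output of channel `i` is therefore
`u_L M_i ∑ₖ u_k² K_{L-k}` for a kernel `K` depending only on the parameters: the model sees `u` only
through one quadratic form. The probes `(x, y, 1, …, 1)` and `(x', y', 1, …, 1)` can be chosen with
equal values of that form while `xy - x'y' ≥ 1/2`, so no such model is within `1/5` of
`G(u) = u_1 u_2` at both.
-/

open Matrix Filter Asymptotics MeasureTheory Real Topology

noncomputable section

/-- Matrix exponential over the reals. -/
def mexp {n : ℕ} (A : Matrix (Fin n) (Fin n) ℝ) : Matrix (Fin n) (Fin n) ℝ :=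
  NormedSpace.exp A

/-- The softplus function `z ↦ log (1 + e^z)`. -/
def softplus (z : ℝ) : ℝ := Real.log (1 + Real.exp z)

/-- Time-varying linear state recursion: `x 0 = 0`,
`x (k+1) = Abar k *ᵥ x k + u k • Bbar k`.  (Index `k : ℕ` is the 0-based
position of the input, so `x (k+1)` is the state `x_{k+1}` after seeing
inputs `u_1 = u 0, …, u_{k+1} = u k`.) -/
def tvState {n : ℕ} (Abar : ℕ → Matrix (Fin n) (Fin n) ℝ) (Bbar : ℕ → Fin n → ℝ)
    (u : ℕ → ℝ) : ℕ → Fin n → ℝ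
  | 0 => 0
  | k + 1 => (Abar k) *ᵥ (tvState Abar Bbar u k) + u k • Bbar k

/-- Zero-padded extension of a finite scalar sequence `(u_1, …, u_L)`
(`u 0` is `u_1`, …, `u ⟨L-1⟩` is `u_L`). -/
def seq {L : ℕ} (u : Fin L → ℝ) : ℕ → ℝ := fun k => if h : k < L then u ⟨k, h⟩ else 0

/-- Zero-padded extension of a finite vector-valued sequence. -/
def seqd {L d : ℕ} (u : Fin L → Fin d → ℝ) : ℕ → Fin d → ℝ :=
  fun k => if h : k < L then u ⟨k, h⟩ else 0

/-- The final (`L`-th) output of an S6 unit in which every sampling interval is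
forced to equal the constant `Δ` (so `Ā = exp(Δ A)` is input-independent, while
`B̄_k = A⁻¹(Ā − I) B u_k` and `C̄_k = u_kᵀ C` remain input-dependent):
`y_L^{(i)} = C̄_L x_L^{(i)}` with `x_k^{(i)} = Ā x_{k-1}^{(i)} + B̄_k u_k^{(i)}`, `x_0 = 0`. -/
def s6FinalFixed {n d : ℕ} (A : Matrix (Fin n) (Fin n) ℝ) (Δ : ℝ)
    (B : Matrix (Fin n) (Fin d) ℝ) (C : Matrix (Fin d) (Fin n) ℝ)
    (L : ℕ) (u : ℕ → Fin d → ℝ) (i : Fin d) : ℝ :=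
  (u (L - 1) ᵥ* C) ⬝ᵥ
    tvState (fun _ => mexp (Δ • A))
      (fun k => A⁻¹ *ᵥ ((mexp (Δ • A) - 1) *ᵥ (B *ᵥ u k)))
      (fun k => u k i) L

/-- The domain `[0,1]^{L-1} × {1}`: scalar sequences `(u_1, …, u_L)` with
`u_j ∈ [0,1]` for `j < L` and `u_L = 1` (0-based indexing). -/
def cubeOne (L : ℕ) : Set (Fin L → ℝ) :=
  {u | (∀ k : Fin L, (k : ℕ) < L - 1 → u k ∈ Set.Icc (0 : ℝ) 1) ∧
       (∀ k : Fin L, (k : ℕ) = L - 1 → u k = 1)}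

theorem tvState_const_eq_sum {n : ℕ} (Ab : Matrix (Fin n) (Fin n) ℝ) (Bbar : ℕ → Fin n → ℝ)
    (u : ℕ → ℝ) (K : ℕ) :
    tvState (fun _ => Ab) Bbar u K
      = ∑ k ∈ Finset.range K, u k • (Ab ^ (K - 1 - k) *ᵥ Bbar k) := by
  induction K with
  | zero => rfl
  | succ K ih =>
    have hshift : ∀ k ∈ Finset.range K,
        Ab *ᵥ (u k • (Ab ^ (K - 1 - k) *ᵥ Bbar k)) = u k • (Ab ^ (K + 1 - 1 - k) *ᵥ Bbar k) := by
      intro k hk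
      rw [mulVec_smul, mulVec_mulVec, ← pow_succ',
        show K - 1 - k + 1 = K + 1 - 1 - k by have := Finset.mem_range.mp hk; omega]
    rw [tvState, ih, mulVec_sum, Finset.sum_congr rfl hshift, Finset.sum_range_succ,
      show K + 1 - 1 - K = 0 by omega, pow_zero, one_mulVec]

/-- The convolution kernel `C̄ Ā^j B̄` of the fixed-`Δ` S6 unit on inputs along `M`. -/
def fixedS6Kernel {n d : ℕ} (A : Matrix (Fin n) (Fin n) ℝ) (Δ : ℝ)
    (B : Matrix (Fin n) (Fin d) ℝ) (C : Matrix (Fin d) (Fin n) ℝ) (M : Fin d → ℝ) (j : ℕ) : ℝ :=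
  (M ᵥ* C) ⬝ᵥ (mexp (Δ • A) ^ j *ᵥ (A⁻¹ *ᵥ ((mexp (Δ • A) - 1) *ᵥ (B *ᵥ M))))

theorem s6FinalFixed_smul {n d : ℕ} (A : Matrix (Fin n) (Fin n) ℝ) (Δ : ℝ)
    (B : Matrix (Fin n) (Fin d) ℝ) (C : Matrix (Fin d) (Fin n) ℝ) (L : ℕ) (v : ℕ → ℝ)
    (M : Fin d → ℝ) (i : Fin d) :
    s6FinalFixed A Δ B C L (fun k => v k • M) i
      = v (L - 1) * M i * ∑ k ∈ Finset.range L, v k ^ 2 * fixedS6Kernel A Δ B C M (L - 1 - k) := by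
  simp only [s6FinalFixed, mulVec_smul, tvState_const_eq_sum, smul_vecMul, smul_dotProduct,
    dotProduct_sum, dotProduct_smul, fixedS6Kernel, Pi.smul_apply, smul_eq_mul, Finset.mul_sum]
  exact Finset.sum_congr rfl fun k _ => by ring

def probe (x y : ℝ) (k : ℕ) : ℝ := if k = 0 then x else if k = 1 then y else 1

theorem probe_mem_cubeOne {L : ℕ} (hL : 3 ≤ L) {x y : ℝ} (hx : x ∈ Set.Icc (0 : ℝ) 1)
    (hy : y ∈ Set.Icc (0 : ℝ) 1) : (fun k : Fin L => probe x y k) ∈ cubeOne L := by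
  refine ⟨fun k _ => ?_, fun k hk => ?_⟩
  · show probe x y k ∈ _
    unfold probe
    split_ifs
    exacts [hx, hy, ⟨zero_le_one, le_rfl⟩]
  · simp only [probe, hk, show L - 1 ≠ 0 by omega, show L - 1 ≠ 1 by omega, if_false]

theorem seq_probe {L : ℕ} (x y : ℝ) {k : ℕ} (hk : k < L) :
    seq (fun j : Fin L => probe x y j) k = probe x y k := by
  simp [_root_.seq, hk]

theorem sum_range_probe_sq_mul (x y : ℝ) (γ : ℕ → ℝ) (m : ℕ) :
    ∑ k ∈ Finset.range (m + 2), probe x y k ^ 2 * γ k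
      = x ^ 2 * γ 0 + y ^ 2 * γ 1 + ∑ k ∈ Finset.range m, γ (k + 2) := by
  simp [Finset.sum_range_succ', probe]
  ring

theorem s6FinalFixed_probe {n d L : ℕ} (hL : 3 ≤ L) (A : Matrix (Fin n) (Fin n) ℝ) (Δ : ℝ)
    (B : Matrix (Fin n) (Fin d) ℝ) (C : Matrix (Fin d) (Fin n) ℝ) (M : Fin d → ℝ) (i : Fin d)
    (x y : ℝ) :
    s6FinalFixed A Δ B C L (fun k => seq (fun j : Fin L => probe x y j) k • M) i
      = M i * (x ^ 2 * fixedS6Kernel A Δ B C M (L - 1) + y ^ 2 * fixedS6Kernel A Δ B C M (L - 2)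
          + ∑ k ∈ Finset.range (L - 2), fixedS6Kernel A Δ B C M (L - 3 - k)) := by
  obtain ⟨m, rfl⟩ : ∃ m, L = m + 2 := ⟨L - 2, by omega⟩
  rw [s6FinalFixed_smul, Finset.sum_congr rfl fun k hk => by
    rw [seq_probe x y (Finset.mem_range.mp hk)], sum_range_probe_sq_mul, seq_probe x y (by omega)]
  simp only [probe, show m + 2 - 1 ≠ 0 by omega, show m + 2 - 1 ≠ 1 by omega, if_false, one_mul]
  rw [show m + 2 - 2 = m by omega]
  congr 3 with k
  rw [show m + 2 - 1 - (k + 2) = m + 2 - 3 - k by omega]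

theorem exists_weighted_sq_sum_eq_mul_gap (a b : ℝ) :
    ∃ x ∈ Set.Icc (0 : ℝ) 1, ∃ y ∈ Set.Icc (0 : ℝ) 1, ∃ x' ∈ Set.Icc (0 : ℝ) 1,
      ∃ y' ∈ Set.Icc (0 : ℝ) 1, a * x ^ 2 + b * y ^ 2 = a * x' ^ 2 + b * y' ^ 2 ∧
        1 / 2 ≤ x * y - x' * y' := by
  wlog hba : |b| ≤ |a| generalizing a b
  · obtain ⟨x, hx, y, hy, x', hx', y', hy', hQ, hgap⟩ := this b a (le_of_not_ge hba)
    exact ⟨y, hy, x, hx, y', hy', x', hx', by linarith, by linarith⟩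
  have hsq : b ^ 2 ≤ a ^ 2 := sq_le_sq.mpr hba
  rcases le_or_gt (a * b) 0 with hab | hab
  -- compare `(1, 1)` with a point `(√s, 0)` on the axis
  · obtain ⟨s, ⟨hs0, hs1⟩, has⟩ : ∃ s ∈ Set.Icc (0 : ℝ) 1, a * s = a + b := by
      rcases eq_or_ne a 0 with rfl | ha
      · have hb : b = 0 := by simpa using hba
        exact ⟨0, by norm_num, by simp [hb]⟩
      refine ⟨(a + b) / a, ⟨?_, ?_⟩, by field_simp⟩ <;>
        rw [show (a + b) / a = (a ^ 2 + a * b) / a ^ 2 by field_simp]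
      · exact div_nonneg (by nlinarith) (sq_nonneg a)
      · exact div_le_one_of_le₀ (by linarith) (sq_nonneg a)
    refine ⟨1, by norm_num, 1, by norm_num, √s, ⟨Real.sqrt_nonneg s, Real.sqrt_le_one.mpr hs1⟩,
      0, by norm_num, ?_, by norm_num⟩
    rw [Real.sq_sqrt hs0]
    linarith
  -- compare a diagonal point `(√r, √r)` with `(1, 0)`, where `r = a / (a + b)`
  · have hab' : 0 < a * (a + b) := by nlinarith
    have hab0 : a + b ≠ 0 := fun h => by simp [h] at hab'
    have hpos : 0 < (a + b) ^ 2 := by positivity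
    set r := a * (a + b) / (a + b) ^ 2 with hr
    have hrQ : (a + b) * r = a := by
      rw [hr]
      field_simp
    have hr0 : 0 ≤ r := div_nonneg hab'.le hpos.le
    have hr_half : 1 / 2 ≤ r := by
      rw [le_div_iff₀ hpos]
      nlinarith
    have hr1 : r ≤ 1 := by
      rw [div_le_one₀ hpos]
      nlinarith
    have hrmem : √r ∈ Set.Icc (0 : ℝ) 1 := ⟨Real.sqrt_nonneg r, Real.sqrt_le_one.mpr hr1⟩
    refine ⟨√r, hrmem, √r, hrmem, 1, by norm_num, 0, by norm_num, ?_, ?_⟩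
    · rw [Real.sq_sqrt hr0]
      linear_combination hrQ
    · rw [Real.mul_self_sqrt hr0]
      linarith

theorem lt_abs_sub_or_lt_abs_sub {a b ε : ℝ} (f : ℝ) (h : 2 * ε < |a - b|) :
    ε < |f - a| ∨ ε < |f - b| := by
  by_contra! hle
  have := abs_sub_le a f b
  rw [abs_sub_comm a f] at this
  linarith [hle.1, hle.2]

theorem s6_single_layer_not_universal_general
    (L : ℕ) (hL : 3 ≤ L) (Δ : ℝ) (σ : ℝ → ℝ) :
    ∃ (G : (Fin L → ℝ) → ℝ), ContinuousOn G (cubeOne L) ∧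
      ∃ ε : ℝ, 0 < ε ∧
        ∀ (d n : ℕ), 1 ≤ d → 1 ≤ n →
          ∀ (M N θ : Fin d → ℝ) (A : Matrix (Fin n) (Fin n) ℝ), IsUnit A.det →
            ∀ (B : Matrix (Fin n) (Fin d) ℝ) (C : Matrix (Fin d) (Fin n) ℝ),
              ∃ u ∈ cubeOne L,
                |(∑ i, N i * σ (s6FinalFixed A Δ B C L (fun k => seq u k • M) i + θ i))
                    - G u| > ε := by
  refine ⟨fun u => u ⟨0, by omega⟩ * u ⟨1, by omega⟩, by fun_prop, 1 / 5, by norm_num, ?_⟩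
  intro d n _ _ M N θ A _ B C
  obtain ⟨x, hx, y, hy, x', hx', y', hy', hQ, hgap⟩ := exists_weighted_sq_sum_eq_mul_gap
    (fixedS6Kernel A Δ B C M (L - 1)) (fixedS6Kernel A Δ B C M (L - 2))
  have hmodel : ∀ i, s6FinalFixed A Δ B C L (fun k => seq (fun j : Fin L => probe x y j) k • M) i
      = s6FinalFixed A Δ B C L (fun k => seq (fun j : Fin L => probe x' y' j) k • M) i := by
    intro i
    rw [s6FinalFixed_probe hL, s6FinalFixed_probe hL]
    linear_combination M i * hQ
  rcases lt_abs_sub_or_lt_abs_sub (a := x * y) (b := x' * y') (ε := 1 / 5)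
    (∑ i, N i * σ (s6FinalFixed A Δ B C L (fun k => seq (fun j : Fin L => probe x y j) k • M) i + θ i))
    (by rw [abs_of_nonneg (by linarith)]; linarith) with h | h
  · exact ⟨_, probe_mem_cubeOne hL hx hy, h⟩
  · refine ⟨_, probe_mem_cubeOne hL hx' hy', ?_⟩
    simp only [← hmodel]
    exact h

/-- **Single-layer S6 (Mamba) models are not universal approximators**
(Theorem 3.1, part 2).  Fix any constant `Δ > 0` and force all sampling
intervals of the S6 unit to equal `Δ`.  Let `σ` be any activation and `L ≥ 3`.
Then there are a continuous `G : [0,1]^{L-1} × {1} → ℝ` and an `ε > 0` such that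
for every width `d ≥ 1`, state dimension `n ≥ 1`, and all parameters
`M, N, θ, A` (invertible), `B`, `C`, the single-layer S6 model is more than
`ε` away from `G` at some point of `[0,1]^{L-1} × {1}`. -/
theorem s6_single_layer_not_universal
    (L : ℕ) (hL : 3 ≤ L) (Δ : ℝ) (hΔ : 0 < Δ) (σ : ℝ → ℝ) :
    ∃ (G : (Fin L → ℝ) → ℝ), ContinuousOn G (cubeOne L) ∧
      ∃ ε : ℝ, 0 < ε ∧
        ∀ (d n : ℕ), 1 ≤ d → 1 ≤ n →
          ∀ (M N θ : Fin d → ℝ) (A : Matrix (Fin n) (Fin n) ℝ), IsUnit A.det →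
            ∀ (B : Matrix (Fin n) (Fin d) ℝ) (C : Matrix (Fin d) (Fin n) ℝ),
              ∃ u ∈ cubeOne L,
                |(∑ i, N i * σ (s6FinalFixed A Δ B C L (fun k => seq u k • M) i + θ i))
                    - G u| > ε :=
  s6_single_layer_not_universal_general L hL Δ σ
end
end

section
/- Quadratic polynomials cannot separate a suitable continuous function (Lemma B.1): For every L ≥ 3 there exists a continuous function G: [0,1]^{L−1} × {1} → ℝ such that for every polynomial P in L real variables of total degree at most 2, there exist two points x, y ∈ [0,1]^{L−1} × {1} with P(x) = P(y) and |G(x) − G(y)| > 1. -/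
open Matrix Filter Asymptotics MeasureTheory Real Topology

noncomputable section

namespace QCSaux

/-- The point `(1/2 + a, 1/2 + b, 0, …, 0, 1)`. -/
def pt (L : ℕ) (a b : ℝ) : Fin L → ℝ := fun i =>
  if (i : ℕ) = 0 then 1/2 + a else if (i : ℕ) = 1 then 1/2 + b
  else if (i : ℕ) = L - 1 then 1 else 0

lemma pt_mem (L : ℕ) (hL : 3 ≤ L) (a b : ℝ) (ha : |a| ≤ 1/2) (hb : |b| ≤ 1/2) :
    pt L a b ∈ cubeOne L := by
  rw [abs_le] at ha hb
  constructor
  · intro k _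
    simp only [pt]
    split_ifs <;> constructor <;> norm_num <;> linarith [ha.1, ha.2, hb.1, hb.2]
  · intro k hk
    have h2 : 2 ≤ L - 1 := by omega
    simp only [pt]
    rw [if_neg (by omega), if_neg (by omega), if_pos hk]

lemma prod_pt (L : ℕ) (i0 i1 : Fin L) (h0 : (i0 : ℕ) = 0) (h1 : (i1 : ℕ) = 1)
    (m : Fin L →₀ ℕ) (a b : ℝ) :
    (∏ i, pt L a b i ^ m i) =
      (1/2 + a) ^ m i0 * (1/2 + b) ^ m i1 *
        ∏ i ∈ Finset.univ \ {i0, i1}, pt L 0 0 i ^ m i := by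
  have h01 : i0 ≠ i1 := by
    intro h; rw [h, h1] at h0; exact one_ne_zero h0
  have hsub : ({i0, i1} : Finset (Fin L)) ⊆ Finset.univ := Finset.subset_univ _
  rw [← Finset.prod_sdiff hsub, Finset.prod_pair h01]
  have e0 : pt L a b i0 = 1/2 + a := by simp [pt, h0]
  have e1 : pt L a b i1 = 1/2 + b := by simp [pt, h1]
  rw [e0, e1]
  have hcongr : ∀ i ∈ Finset.univ \ ({i0, i1} : Finset (Fin L)),
      pt L a b i ^ m i = pt L 0 0 i ^ m i := by
    intro i hi
    simp only [Finset.mem_sdiff, Finset.mem_insert, Finset.mem_singleton, not_or] at hi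
    have hi0 : (i : ℕ) ≠ 0 := fun h => hi.2.1 (Fin.ext (by rw [h, h0]))
    have hi1 : (i : ℕ) ≠ 1 := fun h => hi.2.2 (Fin.ext (by rw [h, h1]))
    simp [pt, hi0, hi1]
  rw [Finset.prod_congr rfl hcongr]
  ring

lemma odd_linear (L : ℕ) (i0 i1 : Fin L) (h0 : (i0 : ℕ) = 0) (h1 : (i1 : ℕ) = 1)
    (P : MvPolynomial (Fin L) ℝ) (hP : P.totalDegree ≤ 2) (a b : ℝ) :
    MvPolynomial.eval (pt L a b) P - MvPolynomial.eval (pt L (-a) (-b)) P =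
      a * (MvPolynomial.eval (pt L 1 0) P - MvPolynomial.eval (pt L (-1) 0) P) +
        b * (MvPolynomial.eval (pt L 0 1) P - MvPolynomial.eval (pt L 0 (-1)) P) := by
  have h01 : i0 ≠ i1 := by
    intro h; rw [h, h1] at h0; exact one_ne_zero h0
  simp only [MvPolynomial.eval_eq']
  rw [← Finset.sum_sub_distrib, ← Finset.sum_sub_distrib, ← Finset.sum_sub_distrib,
      Finset.mul_sum, Finset.mul_sum, ← Finset.sum_add_distrib]
  refine Finset.sum_congr rfl fun m hm => ?_
  rw [prod_pt L i0 i1 h0 h1 m a b, prod_pt L i0 i1 h0 h1 m (-a) (-b),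
      prod_pt L i0 i1 h0 h1 m 1 0, prod_pt L i0 i1 h0 h1 m (-1) 0,
      prod_pt L i0 i1 h0 h1 m 0 1, prod_pt L i0 i1 h0 h1 m 0 (-1)]
  have hdeg : m i0 + m i1 ≤ 2 := by
    have hs : (m.sum fun _ e => e) ≤ 2 := le_trans (MvPolynomial.le_totalDegree hm) hP
    rw [Finsupp.sum_fintype _ _ (fun _ => rfl)] at hs
    have h2 : m i0 + m i1 = ∑ i ∈ ({i0, i1} : Finset (Fin L)), m i :=
      (Finset.sum_pair h01).symm
    rw [h2]
    exact le_trans (Finset.sum_le_sum_of_subset (Finset.subset_univ _)) hs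
  have hn0 : m i0 ≤ 2 := by omega
  have hn1 : m i1 ≤ 2 := by omega
  set n0 := m i0 with hdef0
  set n1 := m i1 with hdef1
  interval_cases n0 <;> interval_cases n1 <;> first | (exfalso; omega) | ring

end QCSaux

open QCSaux in
/-- **Quadratic polynomials cannot separate a suitable continuous function**
(Lemma B.1).  For every `L ≥ 3` there is a continuous function
`G : [0,1]^{L-1} × {1} → ℝ` such that for every polynomial `P` in `L` real
variables of total degree at most `2` there are two points `x, y` in
`[0,1]^{L-1} × {1}` with `P x = P y` and `|G x − G y| > 1`. -/
theorem quadratics_cannot_separate (L : ℕ) (hL : 3 ≤ L) :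
    ∃ (G : (Fin L → ℝ) → ℝ), ContinuousOn G (cubeOne L) ∧
      ∀ P : MvPolynomial (Fin L) ℝ, P.totalDegree ≤ 2 →
        ∃ x ∈ cubeOne L, ∃ y ∈ cubeOne L,
          MvPolynomial.eval x P = MvPolynomial.eval y P ∧ |G x - G y| > 1 := by
  have h0L : 0 < L := by omega
  have h1L : 1 < L := by omega
  set i0 : Fin L := ⟨0, h0L⟩ with hi0def
  set i1 : Fin L := ⟨1, h1L⟩ with hi1def
  have hv0 : (i0 : ℕ) = 0 := rfl
  have hv1 : (i1 : ℕ) = 1 := rfl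
  set G : (Fin L → ℝ) → ℝ := fun u =>
    3 * ((u i0 - 1/2) * Real.cos (4 * π * Real.sqrt ((u i0 - 1/2)^2 + (u i1 - 1/2)^2))
       + (u i1 - 1/2) * Real.sin (4 * π * Real.sqrt ((u i0 - 1/2)^2 + (u i1 - 1/2)^2)))
    with hGdef
  have hGcont : Continuous G := by
    apply Continuous.mul continuous_const
    fun_prop
  refine ⟨G, hGcont.continuousOn, ?_⟩
  intro P hP
  set α : ℝ := MvPolynomial.eval (pt L 1 0) P - MvPolynomial.eval (pt L (-1) 0) P with hα
  set β : ℝ := MvPolynomial.eval (pt L 0 1) P - MvPolynomial.eval (pt L 0 (-1)) P with hβ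
  -- find r ∈ [1/4, 1/2] with α cos(4πr) + β sin(4πr) = 0 by IVT
  set φ : ℝ → ℝ := fun r => α * Real.cos (4 * π * r) + β * Real.sin (4 * π * r) with hφdef
  have hφcont : Continuous φ := by fun_prop
  have hφ14 : φ (1/4) = -α := by
    have h : 4 * π * (1/4 : ℝ) = π := by ring
    simp only [hφdef]; rw [h, Real.cos_pi, Real.sin_pi]; ring
  have hφ12 : φ (1/2) = α := by
    have h : 4 * π * (1/2 : ℝ) = 2 * π := by ring
    simp only [hφdef]; rw [h, Real.cos_two_pi, Real.sin_two_pi]; ring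
  obtain ⟨r, hrI, hr0⟩ : ∃ r ∈ Set.Icc (1/4 : ℝ) (1/2), φ r = 0 := by
    rcases le_total 0 α with hα0 | hα0
    · have := intermediate_value_Icc (by norm_num : (1/4 : ℝ) ≤ 1/2) hφcont.continuousOn
      have h0 : (0 : ℝ) ∈ Set.Icc (φ (1/4)) (φ (1/2)) := by
        rw [hφ14, hφ12]; constructor <;> linarith
      obtain ⟨r, hr, hreq⟩ := this h0
      exact ⟨r, hr, hreq⟩
    · have := intermediate_value_Icc' (by norm_num : (1/4 : ℝ) ≤ 1/2) hφcont.continuousOn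
      have h0 : (0 : ℝ) ∈ Set.Icc (φ (1/2)) (φ (1/4)) := by
        rw [hφ14, hφ12]; constructor <;> linarith
      obtain ⟨r, hr, hreq⟩ := this h0
      exact ⟨r, hr, hreq⟩
  have hr14 : (1/4 : ℝ) ≤ r := hrI.1
  have hr12 : r ≤ (1/2 : ℝ) := hrI.2
  have hrpos : (0 : ℝ) ≤ r := by linarith
  set a : ℝ := r * Real.cos (4 * π * r) with hadef
  set b : ℝ := r * Real.sin (4 * π * r) with hbdef
  have habs_a : |a| ≤ 1/2 := by
    rw [hadef, abs_mul, abs_of_nonneg hrpos]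
    calc r * |Real.cos (4 * π * r)| ≤ r * 1 :=
          mul_le_mul_of_nonneg_left (Real.abs_cos_le_one _) hrpos
      _ ≤ 1/2 := by linarith
  have habs_b : |b| ≤ 1/2 := by
    rw [hbdef, abs_mul, abs_of_nonneg hrpos]
    calc r * |Real.sin (4 * π * r)| ≤ r * 1 :=
          mul_le_mul_of_nonneg_left (Real.abs_sin_le_one _) hrpos
      _ ≤ 1/2 := by linarith
  have habs_na : |(-a)| ≤ 1/2 := by rwa [abs_neg]
  have habs_nb : |(-b)| ≤ 1/2 := by rwa [abs_neg]
  refine ⟨pt L a b, pt_mem L hL a b habs_a habs_b,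
          pt L (-a) (-b), pt_mem L hL (-a) (-b) habs_na habs_nb, ?_, ?_⟩
  · -- equal evaluations
    have hodd := odd_linear L i0 i1 hv0 hv1 P hP a b
    have hzero : a * α + b * β = 0 := by
      have : a * α + b * β = r * φ r := by rw [hφdef, hadef, hbdef]; ring
      rw [this, hr0, mul_zero]
    have : MvPolynomial.eval (pt L a b) P - MvPolynomial.eval (pt L (-a) (-b)) P = 0 := by
      rw [hodd, ← hα, ← hβ]; linarith [hzero]
    linarith [this]
  · -- |G x - G y| > 1
    have ept0 : ∀ x y : ℝ, pt L x y i0 - 1/2 = x := by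
      intro x y; simp [pt, hv0]
    have ept1 : ∀ x y : ℝ, pt L x y i1 - 1/2 = y := by
      intro x y; simp [pt, hv1]
    have hsq : a^2 + b^2 = r^2 := by
      rw [hadef, hbdef]
      linear_combination (r^2) * Real.sin_sq_add_cos_sq (4 * π * r)
    have hsqrt : Real.sqrt (a^2 + b^2) = r := by rw [hsq]; exact Real.sqrt_sq hrpos
    have hsqrtn : Real.sqrt ((-a)^2 + (-b)^2) = r := by
      rw [show (-a)^2 + (-b)^2 = a^2 + b^2 by ring, hsqrt]
    have hGx : G (pt L a b) = 3 * r := by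
      rw [hGdef]
      simp only [ept0, ept1, hsqrt]
      rw [hadef, hbdef]
      linear_combination (3 * r) * Real.sin_sq_add_cos_sq (4 * π * r)
    have hGy : G (pt L (-a) (-b)) = -(3 * r) := by
      rw [hGdef]
      simp only [ept0, ept1, hsqrtn]
      rw [hadef, hbdef]
      linear_combination (-(3 * r)) * Real.sin_sq_add_cos_sq (4 * π * r)
    rw [hGx, hGy]
    rw [show (3 : ℝ) * r - -(3 * r) = 6 * r by ring, abs_of_nonneg (by linarith)]
    linarith

end
end

section
/- Training instability of S6 under growing input magnitude (Theorem 5.1, part 1): Let d = 1 and n ≥ 1, let A ∈ ℝ^{n×n} be diagonal with negative diagonal entries and B ∈ ℝ^{n×1}. Fix L ≥ 1, b ∈ ℝ, and set the S6 selection weight w = 0. Let u = (u_1, …, u_L) be sampled from a probability distribution 𝔻 on ℝ^L, and for c > 0 let c𝔻 denote the law of c·u for u ~ 𝔻. For every C ∈ ℝ^{1×n}, if the three expectations E_{u~𝔻}|∂Γ_S6(u)_L/∂w|, E_{u~𝔻}|∂Γ_S6(u)_L/∂b|, and E_{u~𝔻}|∂Γ_S4D(u)_L/∂b| are all nonzero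 (where the S4D unit shares the same A, B, C, b), then as c → ∞: E_{u~c𝔻}|∂Γ_S6(u)_L/∂w| / E_{u~c𝔻}|∂Γ_S4D(u)_L/∂b| = Ω(c³) and E_{u~c𝔻}|∂Γ_S6(u)_L/∂b| / E_{u~c𝔻}|∂Γ_S4D(u)_L/∂b| = Ω(c²). -/
open Matrix Filter Asymptotics MeasureTheory Real Topology

noncomputable section

/-- Final output `Γ_S4D(u)_L` of a single-channel (`d = 1`) S4D unit:
`Ā = exp(exp(b) A)`, `B̄ = A⁻¹(Ā − I)B`, `x_k = Ā x_{k-1} + B̄ u_k`, `x_0 = 0`,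
`y_k = C x_k`. -/
def s4dScalar {n : ℕ} (A : Matrix (Fin n) (Fin n) ℝ) (B C : Fin n → ℝ) (b : ℝ)
    (L : ℕ) (u : ℕ → ℝ) : ℝ :=
  C ⬝ᵥ tvState (fun _ => mexp (Real.exp b • A))
      (fun _ => A⁻¹ *ᵥ ((mexp (Real.exp b • A) - 1) *ᵥ B)) u L

/-- Final output `Γ_S6(u)_L` of a single-channel (`d = 1`) S6 unit:
`Δ_k = softplus(w u_k + b)`, `Ā_k = exp(Δ_k A)`, `B̄_k = A⁻¹(Ā_k − I)B u_k`,
`x_k = Ā_k x_{k-1} + B̄_k u_k`, `x_0 = 0`, `y_k = (u_k C) x_k`. -/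
def s6Scalar {n : ℕ} (A : Matrix (Fin n) (Fin n) ℝ) (B C : Fin n → ℝ) (w b : ℝ)
    (L : ℕ) (u : ℕ → ℝ) : ℝ :=
  u (L - 1) *
    (C ⬝ᵥ tvState (fun k => mexp (softplus (w * u k + b) • A))
        (fun k => u k • (A⁻¹ *ᵥ ((mexp (softplus (w * u k + b) • A) - 1) *ᵥ B))) u L)

/-! Rescaling the input by `c` multiplies the S4D output by `c` and the S6 output by `c ^ 3`,
the selection weight `w` turning into `c * w`. Hence `∂Γ_S4D/∂b`, `∂Γ_S6/∂b` and `∂Γ_S6/∂w`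
are homogeneous of degrees `1`, `3` and `4` in the input, so under `c𝔻` the three expected
absolute gradients are exactly `c`, `c ^ 3` and `c ^ 4` times their values under `𝔻`. -/

section Homogeneity

variable {n : ℕ}

theorem tvState_const_smul_input (Abar : ℕ → Matrix (Fin n) (Fin n) ℝ) (Bbar : ℕ → Fin n → ℝ)
    (u : ℕ → ℝ) (c : ℝ) : ∀ k, tvState Abar Bbar (c • u) k = c • tvState Abar Bbar u k
  | 0 => by simp [tvState]
  | k + 1 => by
    rw [tvState, tvState, tvState_const_smul_input Abar Bbar u c k, Matrix.mulVec_smul,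
      smul_add, Pi.smul_apply, smul_eq_mul, mul_smul]

theorem tvState_const_smul_Bbar (Abar : ℕ → Matrix (Fin n) (Fin n) ℝ)
    (Bbar : ℕ → Fin n → ℝ) (u : ℕ → ℝ) (c : ℝ) :
    ∀ k, tvState Abar (fun j => c • Bbar j) u k = c • tvState Abar Bbar u k
  | 0 => by simp [tvState]
  | k + 1 => by
    rw [tvState, tvState, tvState_const_smul_Bbar Abar Bbar u c k, Matrix.mulVec_smul,
      smul_add, smul_comm (u k) c]

theorem seq_const_smul {L : ℕ} (c : ℝ) (u : Fin L → ℝ) : seq (c • u) = c • seq u := by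
  funext k
  by_cases h : k < L <;> simp [_root_.seq, h]

variable (A : Matrix (Fin n) (Fin n) ℝ) (B C : Fin n → ℝ) (L : ℕ)

theorem s4dScalar_const_smul (b c : ℝ) (u : ℕ → ℝ) :
    s4dScalar A B C b L (c • u) = c * s4dScalar A B C b L u := by
  rw [s4dScalar, s4dScalar, tvState_const_smul_input, dotProduct_smul, smul_eq_mul]

theorem s6Scalar_const_smul (w b c : ℝ) (u : ℕ → ℝ) :
    s6Scalar A B C w b L (c • u) = c ^ 3 * s6Scalar A B C (c * w) b L u := by
  have hΔ : ∀ k, w * (c • u) k + b = c * w * u k + b := fun k => by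
    rw [Pi.smul_apply, smul_eq_mul]; ring
  have hBbar : ∀ k, (c • u) k • (A⁻¹ *ᵥ ((mexp (softplus (c * w * u k + b) • A) - 1) *ᵥ B)) =
      c • (u k • (A⁻¹ *ᵥ ((mexp (softplus (c * w * u k + b) • A) - 1) *ᵥ B))) := fun k => by
    rw [Pi.smul_apply, smul_eq_mul, mul_smul]
  simp only [s6Scalar, hΔ, hBbar]
  rw [tvState_const_smul_Bbar, tvState_const_smul_input, dotProduct_smul,
    dotProduct_smul, Pi.smul_apply, smul_eq_mul, smul_eq_mul, smul_eq_mul]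
  ring

theorem deriv_s4dScalar_const_smul (b c : ℝ) (u : ℕ → ℝ) :
    deriv (fun b' => s4dScalar A B C b' L (c • u)) b =
      c * deriv (fun b' => s4dScalar A B C b' L u) b := by
  simp only [s4dScalar_const_smul, deriv_const_mul_field]

theorem deriv_s6Scalar_bias_const_smul (w b c : ℝ) (u : ℕ → ℝ) :
    deriv (fun b' => s6Scalar A B C w b' L (c • u)) b =
      c ^ 3 * deriv (fun b' => s6Scalar A B C (c * w) b' L u) b := by
  simp only [s6Scalar_const_smul, deriv_const_mul_field]

theorem deriv_s6Scalar_weight_const_smul (w b c : ℝ) (u : ℕ → ℝ) :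
    deriv (fun w' => s6Scalar A B C w' b L (c • u)) w =
      c ^ 4 * deriv (fun w' => s6Scalar A B C w' b L u) (c * w) := by
  simp only [s6Scalar_const_smul, deriv_const_mul_field]
  rw [deriv_comp_mul_left c (fun w' => s6Scalar A B C w' b L u), smul_eq_mul]
  ring

end Homogeneity

theorem integral_abs_map_const_smul {E : Type*} [AddCommGroup E] [Module ℝ E] [MeasurableSpace E]
    [MeasurableConstSMul ℝ E] (μ : Measure E) {g : E → ℝ} {c : ℝ} (hc : c ≠ 0) (k : ℕ)
    (hg : ∀ v, g (c • v) = c ^ k * g v) :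
    ∫ v, |g v| ∂μ.map (c • ·) = |c| ^ k * ∫ v, |g v| ∂μ := by
  rw [(measurableEmbedding_const_smul₀ hc).integral_map, ← integral_const_mul]
  simp only [hg, abs_mul, abs_pow]

theorem isBigO_pow_sub_div_of_eventuallyEq {F G : ℝ → ℝ} {X Y : ℝ} {p q : ℕ} (hqp : q ≤ p)
    (hX : X ≠ 0) (hY : Y ≠ 0) (hF : ∀ᶠ c in atTop, F c = c ^ p * X)
    (hG : ∀ᶠ c in atTop, G c = c ^ q * Y) :
    (fun c => c ^ (p - q)) =O[atTop] fun c => F c / G c := by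
  refine (isBigO_self_const_mul (div_ne_zero hX hY) _ atTop).congr' .rfl ?_
  filter_upwards [hF, hG, eventually_gt_atTop 0] with c hFc hGc hc
  rw [hFc, hGc, ← pow_sub_mul_pow c hqp]
  field_simp

theorem s6_instability_in_magnitude_general
    (n L : ℕ)
    (A : Matrix (Fin n) (Fin n) ℝ)
    (B : Fin n → ℝ) (b : ℝ)
    (𝔻 : Measure (Fin L → ℝ))
    (C : Fin n → ℝ)
    (hw6 : ∫ u, |deriv (fun w => s6Scalar A B C w b L (seq u)) 0| ∂𝔻 ≠ 0)
    (hb6 : ∫ u, |deriv (fun b' => s6Scalar A B C 0 b' L (seq u)) b| ∂𝔻 ≠ 0)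
    (hb4 : ∫ u, |deriv (fun b' => s4dScalar A B C b' L (seq u)) b| ∂𝔻 ≠ 0) :
    ((fun c : ℝ => c ^ 3) =O[atTop] fun c : ℝ =>
        (∫ u, |deriv (fun w => s6Scalar A B C w b L (seq u)) 0|
            ∂(Measure.map (fun v : Fin L → ℝ => c • v) 𝔻)) /
          (∫ u, |deriv (fun b' => s4dScalar A B C b' L (seq u)) b|
            ∂(Measure.map (fun v : Fin L → ℝ => c • v) 𝔻))) ∧
    ((fun c : ℝ => c ^ 2) =O[atTop] fun c : ℝ =>
        (∫ u, |deriv (fun b' => s6Scalar A B C 0 b' L (seq u)) b|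
            ∂(Measure.map (fun v : Fin L → ℝ => c • v) 𝔻)) /
          (∫ u, |deriv (fun b' => s4dScalar A B C b' L (seq u)) b|
            ∂(Measure.map (fun v : Fin L → ℝ => c • v) 𝔻))) := by
  have scaled {k : ℕ} (g : (Fin L → ℝ) → ℝ)
      (hg : ∀ (c : ℝ) v, g (c • v) = c ^ k * g v) :
      ∀ᶠ c in atTop, ∫ v, |g v| ∂𝔻.map (c • ·) = c ^ k * ∫ v, |g v| ∂𝔻 := by
    filter_upwards [eventually_gt_atTop 0] with c hc
    rw [integral_abs_map_const_smul 𝔻 hc.ne' k (hg c), abs_of_pos hc]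
  have hS6w := scaled (k := 4) (fun v => deriv (fun w => s6Scalar A B C w b L (seq v)) 0)
    fun c v => by rw [seq_const_smul, deriv_s6Scalar_weight_const_smul, mul_zero]
  have hS6b := scaled (k := 3) (fun v => deriv (fun b' => s6Scalar A B C 0 b' L (seq v)) b)
    fun c v => by rw [seq_const_smul, deriv_s6Scalar_bias_const_smul, mul_zero]
  have hS4b := scaled (k := 1) (fun v => deriv (fun b' => s4dScalar A B C b' L (seq v)) b)
    fun c v => by rw [seq_const_smul, deriv_s4dScalar_const_smul, pow_one]
  exact ⟨isBigO_pow_sub_div_of_eventuallyEq (by norm_num) hw6 hb4 hS6w hS4b,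
    isBigO_pow_sub_div_of_eventuallyEq (by norm_num) hb6 hb4 hS6b hS4b⟩

/-- **Training instability of S6 under growing input magnitude**
(Theorem 5.1, part 1).  Let `d = 1`, `A` diagonal with negative diagonal
entries, `B ∈ ℝ^{n×1}`, fix `L ≥ 1`, `b ∈ ℝ` and `w = 0`.  For every `C`, if
the expectations `E_{u∼𝔻}|∂Γ_S6/∂w|`, `E_{u∼𝔻}|∂Γ_S6/∂b|` and
`E_{u∼𝔻}|∂Γ_S4D/∂b|` are all nonzero, then as `c → ∞`,
`E_{u∼c𝔻}|∂Γ_S6/∂w| / E_{u∼c𝔻}|∂Γ_S4D/∂b| = Ω(c³)` and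
`E_{u∼c𝔻}|∂Γ_S6/∂b| / E_{u∼c𝔻}|∂Γ_S4D/∂b| = Ω(c²)`. -/
theorem s6_instability_in_magnitude
    (n L : ℕ) (hn : 1 ≤ n) (hL : 1 ≤ L)
    (A : Matrix (Fin n) (Fin n) ℝ)
    (hAdiag : ∀ i j : Fin n, i ≠ j → A i j = 0) (hAneg : ∀ i : Fin n, A i i < 0)
    (B : Fin n → ℝ) (b : ℝ)
    (𝔻 : Measure (Fin L → ℝ)) [IsProbabilityMeasure 𝔻]
    (C : Fin n → ℝ)
    (hw6 : ∫ u, |deriv (fun w => s6Scalar A B C w b L (seq u)) 0| ∂𝔻 ≠ 0)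
    (hb6 : ∫ u, |deriv (fun b' => s6Scalar A B C 0 b' L (seq u)) b| ∂𝔻 ≠ 0)
    (hb4 : ∫ u, |deriv (fun b' => s4dScalar A B C b' L (seq u)) b| ∂𝔻 ≠ 0) :
    ((fun c : ℝ => c ^ 3) =O[atTop] fun c : ℝ =>
        (∫ u, |deriv (fun w => s6Scalar A B C w b L (seq u)) 0|
            ∂(Measure.map (fun v : Fin L → ℝ => c • v) 𝔻)) /
          (∫ u, |deriv (fun b' => s4dScalar A B C b' L (seq u)) b|
            ∂(Measure.map (fun v : Fin L → ℝ => c • v) 𝔻))) ∧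
    ((fun c : ℝ => c ^ 2) =O[atTop] fun c : ℝ =>
        (∫ u, |deriv (fun b' => s6Scalar A B C 0 b' L (seq u)) b|
            ∂(Measure.map (fun v : Fin L → ℝ => c • v) 𝔻)) /
          (∫ u, |deriv (fun b' => s4dScalar A B C b' L (seq u)) b|
            ∂(Measure.map (fun v : Fin L → ℝ => c • v) 𝔻))) :=
  s6_instability_in_magnitude_general n L A B b 𝔻 C hw6 hb6 hb4
end
end

section
/- Closed forms of the S6 gradients with respect to the selection parameters at w = 0 (from the proof of Theorem 5.1): Let d = 1, A ∈ ℝ^{n×n} diagonal and invertible, B ∈ ℝ^{n×1}, C ∈ ℝ^{1×n}, b ∈ ℝ, and write Ã = exp(softplus(b) A). Then for every input u ∈ ℝ^L, the derivatives of the final S6 output at w = 0 satisfy: ∂Γ_S6(u)_L/∂w = u_L C Σ_{j=1}^L (1 + e^{−b})^{−1} Ã^{L−j} (Ã B u_j³ + u_j² (Ã − I) B Σ_{i=j+1}^L u_i), and ∂Γ_S6(u)_L/∂b = u_L C Σ_{j=1}^L (1 + e^{−b})^{−1} Ã^{L−j} (Ã B u_j² + u_j² (L−j)(Ã − I) B).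 -/
open Matrix Filter Asymptotics MeasureTheory Real Topology

noncomputable section

/-!
The transition matrices `exp (Δ_k • A)` all commute, so the state telescopes to
`x_L = ∑_j u_j² (exp (T_j • A) - exp (S_j • A)) A⁻¹ B` with `T_j = ∑_{j ≤ k < L} Δ_k` and
`S_j = ∑_{j < k < L} Δ_k`. Differentiating `exp (t • A)` produces a factor `A`, which
cancels `A⁻¹`. At `w = 0` every `Δ_k` equals `softplus b`, so `exp (T_j • A) = Ã ^ (L - j)`
and `exp (S_j • A) = Ã ^ (L - 1 - j)`, while `∂Δ_k/∂w = (1 + e^{-b})⁻¹ u_k` and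
`∂Δ_k/∂b = (1 + e^{-b})⁻¹`.
-/

section

variable {n : ℕ}

theorem mexp_add_smul (A : Matrix (Fin n) (Fin n) ℝ) (s t : ℝ) :
    mexp ((s + t) • A) = mexp (s • A) * mexp (t • A) := by
  rw [mexp, add_smul, Matrix.exp_add_of_commute _ _ (((Commute.refl A).smul_left s).smul_right t)]
  rfl

theorem mexp_natCast_mul_smul (A : Matrix (Fin n) (Fin n) ℝ) (m : ℕ) (t : ℝ) :
    mexp (((m : ℝ) * t) • A) = mexp (t • A) ^ m := by
  rw [mexp, mul_smul, Nat.cast_smul_eq_nsmul, Matrix.exp_nsmul]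
  rfl

theorem commute_mexp_smul (A : Matrix (Fin n) (Fin n) ℝ) (t : ℝ) :
    Commute A (mexp (t • A)) :=
  ((Commute.refl A).smul_right t).exp_right

theorem commute_nonsing_inv_mexp_smul (A : Matrix (Fin n) (Fin n) ℝ) (t : ℝ) :
    Commute A⁻¹ (mexp (t • A)) := by
  simpa using Matrix.Commute.zpow_left (commute_mexp_smul A t) (-1)

theorem hasDerivAt_mexp_smul_mulVec (A : Matrix (Fin n) (Fin n) ℝ) (v : Fin n → ℝ) (t : ℝ) :
    HasDerivAt (fun s => mexp (s • A) *ᵥ v) (mexp (t • A) *ᵥ (A *ᵥ v)) t := by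
  open scoped Norms.Operator in
  let evalAt : Matrix (Fin n) (Fin n) ℝ →ₗ[ℝ] Fin n → ℝ :=
    { toFun := fun M => M *ᵥ v
      map_add' := fun M N => Matrix.add_mulVec M N v
      map_smul' := fun c M => Matrix.smul_mulVec c M v }
  exact (evalAt.toContinuousLinearMap.hasFDerivAt.comp_hasDerivAt t
    (hasDerivAt_exp_smul_const A t)).congr_deriv (Matrix.mulVec_mulVec v _ A).symm

theorem HasDerivAt.const_dotProduct {f : ℝ → Fin n → ℝ} {f' : Fin n → ℝ} {x : ℝ}
    (hf : HasDerivAt f f' x) (c : Fin n → ℝ) :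
    HasDerivAt (fun y => c ⬝ᵥ f y) (c ⬝ᵥ f') x :=
  HasDerivAt.fun_sum fun i _ => (hasDerivAt_pi.1 hf i).const_mul (c i)

theorem tvState_mexp_smul_eq_sum (A : Matrix (Fin n) (Fin n) ℝ) (Δ : ℕ → ℝ)
    (Bbar : ℕ → Fin n → ℝ) (v : ℕ → ℝ) (L : ℕ) :
    tvState (fun k => mexp (Δ k • A)) Bbar v L =
      ∑ j ∈ Finset.range L, v j • (mexp ((∑ k ∈ Finset.Ico (j + 1) L, Δ k) • A) *ᵥ Bbar j) := by
  induction L with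
  | zero => rfl
  | succ L ih =>
    rw [tvState, ih, Finset.sum_range_succ, Finset.Ico_self, Finset.sum_empty, zero_smul,
      show mexp (0 : Matrix (Fin n) (Fin n) ℝ) = 1 from NormedSpace.exp_zero, Matrix.one_mulVec,
      Matrix.mulVec_sum]
    congr 1
    refine Finset.sum_congr rfl fun j hj => ?_
    rw [Finset.sum_Ico_succ_top (by simpa using hj), add_comm _ (Δ L), mexp_add_smul,
      Matrix.mulVec_smul, Matrix.mulVec_mulVec]

theorem tvState_s6_eq_sum (A : Matrix (Fin n) (Fin n) ℝ) (Δ : ℕ → ℝ) (B : Fin n → ℝ)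
    (v : ℕ → ℝ) (L : ℕ) :
    tvState (fun k => mexp (Δ k • A))
        (fun k => v k • (A⁻¹ *ᵥ ((mexp (Δ k • A) - 1) *ᵥ B))) v L =
      ∑ j ∈ Finset.range L, v j ^ 2 •
        (mexp ((∑ k ∈ Finset.Ico j L, Δ k) • A) *ᵥ (A⁻¹ *ᵥ B) -
          mexp ((∑ k ∈ Finset.Ico (j + 1) L, Δ k) • A) *ᵥ (A⁻¹ *ᵥ B)) := by
  rw [tvState_mexp_smul_eq_sum]
  refine Finset.sum_congr rfl fun j hj => ?_
  rw [Finset.sum_eq_sum_Ico_succ_bot (Finset.mem_range.1 hj), add_comm (Δ j), mexp_add_smul,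
    Matrix.mulVec_smul, smul_smul, ← pow_two, ← Matrix.sub_mulVec, Matrix.mulVec_mulVec,
    Matrix.mulVec_mulVec, Matrix.mulVec_mulVec]
  congr 2
  simp only [mul_sub, sub_mul, mul_one, mul_assoc, (commute_nonsing_inv_mexp_smul A (Δ j)).eq]

theorem hasDerivAt_tvState_s6 {A : Matrix (Fin n) (Fin n) ℝ} (hA : IsUnit A.det)
    (B : Fin n → ℝ) (v : ℕ → ℝ) (L : ℕ) {Δ : ℝ → ℕ → ℝ} {Δ' : ℕ → ℝ} {θ δ : ℝ}
    (hΔ : ∀ k, HasDerivAt (Δ · k) (Δ' k) θ) (hδ : ∀ k, Δ θ k = δ) :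
    HasDerivAt
      (fun t => tvState (fun k => mexp (Δ t k • A))
        (fun k => v k • (A⁻¹ *ᵥ ((mexp (Δ t k • A) - 1) *ᵥ B))) v L)
      (∑ j ∈ Finset.range L, v j ^ 2 • (mexp (δ • A) ^ (L - 1 - j) *ᵥ
        (Δ' j • (mexp (δ • A) *ᵥ B) +
          (∑ k ∈ Finset.Ico (j + 1) L, Δ' k) • ((mexp (δ • A) - 1) *ᵥ B)))) θ := by
  simp_rw [tvState_s6_eq_sum]
  refine HasDerivAt.fun_sum fun j hj => ?_
  have hj : j < L := Finset.mem_range.1 hj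
  have hexp (i : ℕ) := (hasDerivAt_mexp_smul_mulVec A (A⁻¹ *ᵥ B) _).scomp θ
    (HasDerivAt.fun_sum fun k (_ : k ∈ Finset.Ico i L) => hΔ k)
  refine (((hexp j).sub (hexp (j + 1))).const_smul (v j ^ 2)).congr_deriv ?_
  have hB : A *ᵥ (A⁻¹ *ᵥ B) = B := by
    rw [Matrix.mulVec_mulVec, Matrix.mul_nonsing_inv A hA, Matrix.one_mulVec]
  have hsum (i : ℕ) : ∑ k ∈ Finset.Ico i L, Δ θ k = ((L - i : ℕ) : ℝ) * δ := by
    simp [hδ]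
  simp only [hsum, hB]
  rw [show L - j = L - 1 - j + 1 by omega, show L - (j + 1) = L - 1 - j by omega,
    mexp_natCast_mul_smul, mexp_natCast_mul_smul, pow_succ (mexp (δ • A)),
    Finset.sum_eq_sum_Ico_succ_bot hj]
  simp only [Matrix.mulVec_add, Matrix.mulVec_smul, Matrix.mulVec_sub, Matrix.sub_mulVec,
    Matrix.mulVec_mulVec, mul_one, add_smul]
  module

end

theorem hasDerivAt_softplus (z : ℝ) : HasDerivAt softplus (1 + Real.exp (-z))⁻¹ z := by
  refine HasDerivAt.congr_deriv (f := fun y => Real.log (1 + Real.exp y))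
    (((Real.hasDerivAt_exp z).const_add 1).log (by positivity)) ?_
  rw [Real.exp_neg]
  field_simp
  ring

theorem seq_coe {L : ℕ} (u : Fin L → ℝ) (i : Fin L) : seq u i = u i :=
  dif_pos i.isLt

theorem sum_range_seq {M : Type*} [AddCommMonoid M] {L : ℕ} (u : Fin L → ℝ) (f : ℕ → ℝ → M) :
    ∑ j ∈ Finset.range L, f j (seq u j) = ∑ j : Fin L, f j (u j) := by
  simp only [← Fin.sum_univ_eq_sum_range, seq_coe]

theorem sum_Ico_seq {L : ℕ} (u : Fin L → ℝ) (j : Fin L) :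
    ∑ k ∈ Finset.Ico ((j : ℕ) + 1) L, seq u k =
      ∑ i ∈ Finset.univ.filter (fun i : Fin L => j < i), u i := by
  have hIco : Finset.Ico ((j : ℕ) + 1) L = (Finset.range L).filter (fun k => (j : ℕ) < k) := by
    ext k
    simp only [Finset.mem_Ico, Finset.mem_filter, Finset.mem_range]
    omega
  rw [hIco, Finset.sum_filter, Finset.sum_filter,
    sum_range_seq u (fun k x => if (j : ℕ) < k then x else 0)]
  rfl

/-- **Closed forms of the S6 gradients with respect to the selection parameters
at `w = 0`** (from the proof of Theorem 5.1).  With `Ã = exp(softplus(b) A)`: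
`∂Γ_S6(u)_L/∂w = u_L C Σ_j (1+e^{−b})⁻¹ Ã^{L−j} (Ã B u_j³ + u_j² (Ã−I) B Σ_{i>j} u_i)`
and
`∂Γ_S6(u)_L/∂b = u_L C Σ_j (1+e^{−b})⁻¹ Ã^{L−j} (Ã B u_j² + u_j² (L−j)(Ã−I) B)`. -/
theorem s6_gradients_closed_form
    (n L : ℕ) (hL : 1 ≤ L)
    (A : Matrix (Fin n) (Fin n) ℝ)
    (hA : IsUnit A.det)
    (B C : Fin n → ℝ) (b : ℝ) (u : Fin L → ℝ) :
    (deriv (fun w => s6Scalar A B C w b L (seq u)) 0 =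
      u ⟨L - 1, by omega⟩ *
        (C ⬝ᵥ ∑ j : Fin L,
          (1 + Real.exp (-b))⁻¹ •
            (((mexp (softplus b • A)) ^ (L - 1 - (j : ℕ))) *ᵥ
              ((u j ^ 3) • (mexp (softplus b • A) *ᵥ B) +
                (u j ^ 2 * ∑ i ∈ Finset.univ.filter (fun i : Fin L => j < i), u i) •
                  ((mexp (softplus b • A) - 1) *ᵥ B))))) ∧
    (deriv (fun b' => s6Scalar A B C 0 b' L (seq u)) b =
      u ⟨L - 1, by omega⟩ *
        (C ⬝ᵥ ∑ j : Fin L,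
          (1 + Real.exp (-b))⁻¹ •
            (((mexp (softplus b • A)) ^ (L - 1 - (j : ℕ))) *ᵥ
              ((u j ^ 2) • (mexp (softplus b • A) *ᵥ B) +
                (u j ^ 2 * ((L - 1 - (j : ℕ) : ℕ) : ℝ)) •
                  ((mexp (softplus b • A) - 1) *ᵥ B))))) := by
  have hlast : seq u (L - 1) = u ⟨L - 1, by omega⟩ := seq_coe u ⟨L - 1, by omega⟩
  constructor
  · have hΔ (k : ℕ) : HasDerivAt (fun w => softplus (w * seq u k + b))
        ((1 + Real.exp (-b))⁻¹ * seq u k) 0 := by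
      refine ((hasDerivAt_softplus _).comp 0
        ((hasDerivAt_mul_const (seq u k)).add_const b)).congr_deriv ?_
      simp
    unfold s6Scalar
    rw [(((hasDerivAt_tvState_s6 hA B (seq u) L hΔ (δ := softplus b) (by simp)).const_dotProduct
      C).const_mul (seq u (L - 1))).deriv, hlast, ← Fin.sum_univ_eq_sum_range]
    congr 2
    refine Finset.sum_congr rfl fun j _ => ?_
    rw [seq_coe, ← Finset.mul_sum, sum_Ico_seq]
    simp only [Matrix.mulVec_add, Matrix.mulVec_smul]
    module
  · have hΔ (k : ℕ) :
        HasDerivAt (fun b' => softplus (0 * seq u k + b')) (1 + Real.exp (-b))⁻¹ b := by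
      simpa using hasDerivAt_softplus b
    unfold s6Scalar
    rw [(((hasDerivAt_tvState_s6 hA B (seq u) L hΔ (δ := softplus b) (by simp)).const_dotProduct
      C).const_mul (seq u (L - 1))).deriv, hlast, ← Fin.sum_univ_eq_sum_range]
    congr 2
    refine Finset.sum_congr rfl fun j _ => ?_
    rw [seq_coe, Finset.sum_const, Nat.card_Ico, show L - (j + 1) = L - 1 - j by omega]
    simp only [Matrix.mulVec_add, Matrix.mulVec_smul]
    module
end
end
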